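/- arXiv:2102.07364 — 3 statements merged into one kernel-verified Lean document; each statement's English description precedes it below -/
import Mathlib

section
/- (Sudakov corollary for the l1 ball) For any δ > 0 and d ≥ 2, the logarithm of the δ-covering number of the l1 ball B₁ᵈ(r) in the Euclidean norm is at most 16 r² log(d) / δ². -/
noncomputable def coveringNumber {α : Type*} [PseudoMetricSpace α] (δ : ℝ) (T : Set α) : ℕ∞ :=
  ⨅ (S : Finset α) (_ : ↑S ⊆ T ∧ ∀ x ∈ T, ∃ y ∈ S, dist x y ≤ δ), (S.card : ℕ∞)

def l1Ball (d : ℕ) (r : ℝ) : Set (EuclideanSpace ℝ (Fin d)) := {x | ∑ i, |x i| ≤ r}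

/-!
Round every coordinate of `x ∈ B₁ᵈ(r)` towards zero to a multiple of `ε = δ² / r`. The rounded
point is a sum of at most `⌊r / ε⌋ = ⌊r² / δ²⌋` vectors of the form `0` or `±ε eᵢ`, and since each
coordinate error is at most `min (ε, |xᵢ|)`, its squared Euclidean distance to `x` is at most
`ε ‖x‖₁ ≤ δ²`. Hence `N(δ, B₁ᵈ(r)) ≤ (3d) ^ ⌊r² / δ²⌋`, and `log (3d) ≤ 3 log d` for `d ≥ 2`.
-/

open Finset Pointwise

lemma coveringNumber_le_card {α : Type*} [PseudoMetricSpace α] {δ : ℝ} {T : Set α}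
    (S : Finset α) (hS : ∀ x ∈ T, ∃ y ∈ S, y ∈ T ∧ dist x y ≤ δ) :
    coveringNumber δ T ≤ #S := by
  classical
  refine (iInf₂_le (S.filter (· ∈ T)) ⟨fun y hy => (mem_filter.1 hy).2, fun x hx => ?_⟩).trans
    (by exact_mod_cast card_filter_le S _)
  obtain ⟨y, hyS, hyT, hxy⟩ := hS x hx
  exact ⟨y, mem_filter.2 ⟨hyS, hyT⟩, hxy⟩

lemma Finset.sum_nsmul_mem_nsmul {ι E : Type*} [AddCommMonoid E] [DecidableEq E] {A : Finset E}
    (s : Finset ι) (q : ι → ℕ) {v : ι → E} (hv : ∀ i ∈ s, v i ∈ A) :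
    ∑ i ∈ s, q i • v i ∈ (∑ i ∈ s, q i) • A := by
  classical
  induction s using Finset.induction_on with
  | empty => simp
  | insert i s hi ih =>
    rw [sum_insert hi, sum_insert hi, add_nsmul]
    exact add_mem_add (nsmul_mem_nsmul (hv i (mem_insert_self i s)))
      (ih fun j hj => hv j (mem_insert_of_mem hj))

lemma Real.log_natCast_le_log_natCast {m n : ℕ} (h : m ≤ n) : Real.log m ≤ Real.log n := by
  rcases m.eq_zero_or_pos with rfl | hm
  · simpa using Real.log_natCast_nonneg n
  · exact Real.log_le_log (by exact_mod_cast hm) (by exact_mod_cast h)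

lemma EuclideanSpace.dist_sq_le_mul_sum_abs_sub {ι : Type*} [Fintype ι] {ε : ℝ}
    {x y : EuclideanSpace ℝ ι} (h : ∀ i, |x i - y i| ≤ ε) :
    dist x y ^ 2 ≤ ε * ∑ i, |x i - y i| := by
  rw [EuclideanSpace.dist_eq, Real.sq_sqrt (by positivity), mul_sum]
  gcongr with i
  rw [Real.dist_eq, sq]
  exact mul_le_mul_of_nonneg_right (h i) (abs_nonneg _)

section RoundTowardZero

variable {ε : ℝ}

noncomputable def roundTowardZero (ε a : ℝ) : ℝ := SignType.sign a * (ε * ⌊|a| / ε⌋₊)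

lemma mul_floor_abs_div_le (hε : 0 ≤ ε) (a : ℝ) : ε * ⌊|a| / ε⌋₊ ≤ |a| := by
  rcases hε.eq_or_lt with rfl | hε
  · simp
  · rw [← le_div_iff₀' hε]
    exact Nat.floor_le (by positivity)

lemma abs_sign_le_one (a : ℝ) : |(SignType.sign a : ℝ)| ≤ 1 := by
  rcases SignType.sign a with _ | _ | _ <;> simp

lemma abs_sub_roundTowardZero_le_sub (hε : 0 ≤ ε) (a : ℝ) :
    |a - roundTowardZero ε a| ≤ |a| - ε * ⌊|a| / ε⌋₊ := by
  have hsub : a - roundTowardZero ε a = SignType.sign a * (|a| - ε * ⌊|a| / ε⌋₊) := by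
    unfold roundTowardZero
    linear_combination (-1 : ℝ) * sign_mul_abs a
  rw [hsub, abs_mul, abs_of_nonneg (sub_nonneg.2 (mul_floor_abs_div_le hε a))]
  exact mul_le_of_le_one_left (sub_nonneg.2 (mul_floor_abs_div_le hε a)) (abs_sign_le_one a)

lemma abs_roundTowardZero_le (hε : 0 ≤ ε) (a : ℝ) : |roundTowardZero ε a| ≤ |a| := by
  rw [roundTowardZero, abs_mul, abs_of_nonneg (mul_nonneg hε (Nat.cast_nonneg _))]
  exact mul_le_of_le_one_left (by positivity) (abs_sign_le_one a) |>.trans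
    (mul_floor_abs_div_le hε a)

lemma abs_sub_roundTowardZero_le_abs (hε : 0 ≤ ε) (a : ℝ) : |a - roundTowardZero ε a| ≤ |a| :=
  (abs_sub_roundTowardZero_le_sub hε a).trans (sub_le_self _ (by positivity))

lemma abs_sub_roundTowardZero_le (hε : 0 < ε) (a : ℝ) : |a - roundTowardZero ε a| ≤ ε := by
  refine (abs_sub_roundTowardZero_le_sub hε.le a).trans ?_
  have := Nat.lt_floor_add_one (|a| / ε)
  rw [div_lt_iff₀ hε] at this
  linarith

end RoundTowardZero

section SignedBasis

variable {d : ℕ} {ε r δ : ℝ}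

noncomputable def signedBasis (d : ℕ) (ε : ℝ) : Finset (EuclideanSpace ℝ (Fin d)) :=
  univ.image fun p : Fin d × SignType => WithLp.toLp 2 (Pi.single p.1 (ε * p.2))

lemma card_signedBasis_le : #(signedBasis d ε) ≤ 3 * d :=
  card_image_le.trans_eq (by rw [card_univ, Fintype.card_prod, Fintype.card_fin, mul_comm]; rfl)

lemma zero_mem_signedBasis (hd : d ≠ 0) : 0 ∈ signedBasis d ε :=
  mem_image.2 ⟨(⟨0, Nat.pos_of_ne_zero hd⟩, 0), mem_univ _, by ext; simp⟩

lemma exists_mem_nsmul_signedBasis_dist_sq_le (hd : d ≠ 0) (hε : 0 < ε)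
    {x : EuclideanSpace ℝ (Fin d)} (hx : x ∈ l1Ball d r) :
    ∃ y ∈ ⌊r / ε⌋₊ • signedBasis d ε, y ∈ l1Ball d r ∧ dist x y ^ 2 ≤ ε * r := by
  let q i := ⌊|x i| / ε⌋₊
  let y : EuclideanSpace ℝ (Fin d) := WithLp.toLp 2 fun i => roundTowardZero ε (x i)
  have hy : y = ∑ i, q i • WithLp.toLp 2 (Pi.single i (ε * SignType.sign (x i))) := by
    ext j
    simp only [y, q, roundTowardZero, PiLp.toLp_single, WithLp.ofLp_sum, WithLp.ofLp_smul,
      PiLp.ofLp_single, nsmul_eq_mul, Finset.sum_apply, Pi.mul_apply, Pi.natCast_apply,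
      Pi.single_apply, mul_ite, mul_zero, sum_ite_eq, mem_univ, ↓reduceIte]
    ring
  have hq : ∑ i, q i ≤ ⌊r / ε⌋₊ := by
    refine Nat.le_floor ?_
    push_cast
    calc ∑ i, (q i : ℝ) ≤ ∑ i, |x i| / ε := by
          gcongr with i; exact Nat.floor_le (by positivity)
      _ = (∑ i, |x i|) / ε := (sum_div _ _ _).symm
      _ ≤ r / ε := by gcongr; exact hx
  refine ⟨y, ?_, ?_, ?_⟩
  · rw [hy]
    exact nsmul_subset_nsmul_right (zero_mem_signedBasis hd) hq
      (sum_nsmul_mem_nsmul _ _ fun i _ => mem_image_of_mem _ (mem_univ (i, SignType.sign (x i))))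
  · exact (sum_le_sum fun i _ => abs_roundTowardZero_le hε.le (x i)).trans hx
  · calc dist x y ^ 2 ≤ ε * ∑ i, |x i - y i| :=
          EuclideanSpace.dist_sq_le_mul_sum_abs_sub fun i => abs_sub_roundTowardZero_le hε _
      _ ≤ ε * r := by
          gcongr
          exact (sum_le_sum fun i _ => abs_sub_roundTowardZero_le_abs hε.le (x i)).trans hx

lemma coveringNumber_l1Ball_le (hd : d ≠ 0) (hε : 0 < ε) (hδ : 0 ≤ δ) (hεδ : ε * r ≤ δ ^ 2) :
    coveringNumber δ (l1Ball d r) ≤ ((3 * d) ^ ⌊r / ε⌋₊ : ℕ) := by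
  refine (coveringNumber_le_card (⌊r / ε⌋₊ • signedBasis d ε) fun x hx => ?_).trans ?_
  · obtain ⟨y, hyS, hyT, hxy⟩ := exists_mem_nsmul_signedBasis_dist_sq_le hd hε hx
    exact ⟨y, hyS, hyT, (pow_le_pow_iff_left₀ dist_nonneg hδ two_ne_zero).1 (hxy.trans hεδ)⟩
  · exact_mod_cast card_nsmul_le.trans (Nat.pow_le_pow_left card_signedBasis_le _)

end SignedBasis

lemma Real.log_three_mul_le_three_mul_log {d : ℕ} (hd : 2 ≤ d) :
    Real.log (3 * d) ≤ 3 * Real.log d := by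
  have hd' : (2 : ℝ) ≤ d := by exact_mod_cast hd
  have hd3 : 3 * (d : ℝ) ≤ d ^ 3 := by nlinarith [mul_le_mul hd' hd' zero_le_two (by positivity)]
  calc Real.log (3 * d) ≤ Real.log ((d : ℝ) ^ 3) := Real.log_le_log (by positivity) hd3
    _ = 3 * Real.log d := by simp [Real.log_pow]

/-- Sudakov corollary: `log N(δ, B₁ᵈ(r), ‖·‖₂) ≤ 16 r² log d / δ²` for `d ≥ 2`. -/
theorem sudakov_covering_l1_ball (d : ℕ) (hd : 2 ≤ d) (r δ : ℝ) (hr : 0 < r) (hδ : 0 < δ) :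
    coveringNumber δ (l1Ball d r) ≠ ⊤ ∧
      Real.log ((coveringNumber δ (l1Ball d r)).toNat) ≤
        16 * r ^ 2 * Real.log d / δ ^ 2 := by
  set k := ⌊r ^ 2 / δ ^ 2⌋₊
  have hN : coveringNumber δ (l1Ball d r) ≤ ((3 * d) ^ k : ℕ) := by
    have h := coveringNumber_l1Ball_le (d := d) (r := r) (ε := δ ^ 2 / r) (by omega)
      (by positivity) hδ.le (div_mul_cancel₀ _ hr.ne').le
    rwa [div_div_eq_mul_div, ← sq] at h
  refine ⟨ne_top_of_le_ne_top (ENat.natCast_ne_top _) hN, ?_⟩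
  have hlogd : 0 ≤ Real.log d := Real.log_natCast_nonneg d
  calc Real.log ((coveringNumber δ (l1Ball d r)).toNat)
      ≤ Real.log ((3 * d) ^ k : ℕ) :=
        Real.log_natCast_le_log_natCast (ENat.toNat_le_of_le_natCast hN)
    _ = k * Real.log (3 * d) := by push_cast; rw [Real.log_pow]
    _ ≤ r ^ 2 / δ ^ 2 * (3 * Real.log d) :=
        mul_le_mul (Nat.floor_le (by positivity)) (Real.log_three_mul_le_three_mul_log hd)
          (Real.log_nonneg (by norm_cast; omega)) (by positivity)
    _ ≤ 16 * r ^ 2 * Real.log d / δ ^ 2 := by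
        rw [div_mul_eq_mul_div]
        exact div_le_div_of_nonneg_right (by nlinarith [mul_nonneg (sq_nonneg r) hlogd])
          (by positivity)
end

section
/- Let G₁ : ℝᵏ → ℝᵖ be L₁-Lipschitz and G₂ : ℝᵖ → ℝⁿ be L₂-Lipschitz. Then for δ > 0, K ≥ 1, and r₂ = Kδ/L₂, the covering number of the image set G₂(G₁(B₂ᵏ(r₁)) ⊕ B₁ᵖ(r₂)) at scale 2δ satisfies log N(2δ, G₂(G₁(B₂ᵏ(r₁)) ⊕ B₁ᵖ(r₂)), ‖·‖₂) ≤ k·log(4L₁L₂r₁/δ) + K²·log(2p+1). -/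
open scoped NNReal Pointwise

/-!
The Euclidean ball has a `δ/(L₁L₂)`-net of size `(4L₁L₂r₁/δ)ᵏ`: a maximal `ε`-separated set is an
`ε`-net, and its disjoint `ε/2`-balls fit into a ball of radius `r₁ + ε/2`. The `ℓ¹` ball of
radius `r` has an `r/K`-net of size `(2p+1)^K²` by Maurey's argument: each of its points is a
convex combination of the `2p+1` points `0, ±r eᵢ`, and an average of `m = ⌊K²⌋` of these,
chosen greedily, is within `√((r² - ‖x‖²)/m)` of `x`. A net of a Lipschitz image or of a
Minkowski sum is obtained from nets of the pieces, with the radii scaled and added.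
-/

open Metric Finset MeasureTheory Module
open scoped ENNReal

section Net

variable {X : Type*} [PseudoMetricSpace X]

def IsNet (δ : ℝ) (T : Set X) (S : Finset X) : Prop :=
  ↑S ⊆ T ∧ ∀ x ∈ T, ∃ y ∈ S, dist x y ≤ δ

lemma IsNet.coveringNumber_le {δ : ℝ} {T : Set X} {S : Finset X} (hS : IsNet δ T S) :
    coveringNumber δ T ≤ S.card :=
  iInf₂_le S hS

lemma IsNet.coveringNumber_ne_top {δ : ℝ} {T : Set X} {S : Finset X} (hS : IsNet δ T S) :
    coveringNumber δ T ≠ ⊤ :=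
  ne_top_of_le_ne_top (ENat.natCast_ne_top _) hS.coveringNumber_le

lemma IsNet.log_coveringNumber_le {δ B : ℝ} {T : Set X} {S : Finset X} (hS : IsNet δ T S)
    (hSB : (S.card : ℝ) ≤ B) (hB : 1 ≤ B) :
    Real.log (coveringNumber δ T).toNat ≤ Real.log B := by
  have hN : (coveringNumber δ T).toNat ≤ S.card := by
    have := hS.coveringNumber_le
    rwa [← ENat.natCast_toNat hS.coveringNumber_ne_top, Nat.cast_le] at this
  rcases Nat.eq_zero_or_pos (coveringNumber δ T).toNat with h0 | hpos
  · simpa [h0] using Real.log_nonneg hB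
  · exact Real.log_le_log (by exact_mod_cast hpos) ((Nat.cast_le.mpr hN).trans hSB)

lemma IsNet.image_of_lipschitzWith {Y : Type*} [PseudoMetricSpace Y] [DecidableEq Y]
    {δ : ℝ} {T : Set X} {S : Finset X} (hS : IsNet δ T S) {L : ℝ≥0} {f : X → Y}
    (hf : LipschitzWith L f) : IsNet (L * δ) (f '' T) (S.image f) := by
  refine ⟨by simpa using Set.image_mono hS.1, ?_⟩
  rintro _ ⟨x, hx, rfl⟩
  obtain ⟨y, hy, hxy⟩ := hS.2 x hx
  exact ⟨f y, mem_image_of_mem f hy,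
    (hf.dist_le_mul x y).trans (mul_le_mul_of_nonneg_left hxy L.2)⟩

lemma IsNet.add {E : Type*} [SeminormedAddCommGroup E] [DecidableEq E] {δ₁ δ₂ : ℝ}
    {T₁ T₂ : Set E} {S₁ S₂ : Finset E} (h₁ : IsNet δ₁ T₁ S₁) (h₂ : IsNet δ₂ T₂ S₂) :
    IsNet (δ₁ + δ₂) (T₁ + T₂) (S₁ + S₂) := by
  refine ⟨by simpa using Set.add_subset_add h₁.1 h₂.1, ?_⟩
  rintro _ ⟨x₁, hx₁, x₂, hx₂, rfl⟩
  obtain ⟨y₁, hy₁, hd₁⟩ := h₁.2 x₁ hx₁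
  obtain ⟨y₂, hy₂, hd₂⟩ := h₂.2 x₂ hx₂
  exact ⟨y₁ + y₂, add_mem_add hy₁ hy₂, (dist_add_add_le _ _ _ _).trans (add_le_add hd₁ hd₂)⟩

lemma exists_isNet_image_add_image {E Y : Type*} [SeminormedAddCommGroup E] [PseudoMetricSpace Y]
    {G₁ : X → E} {G₂ : E → Y} {L₁ L₂ : ℝ≥0} (hG₁ : LipschitzWith L₁ G₁)
    (hG₂ : LipschitzWith L₂ G₂) {A : Set X} {B : Set E} {S₁ : Finset X} {S₂ : Finset E}
    {ε₁ ε₂ : ℝ} (h₁ : IsNet ε₁ A S₁) (h₂ : IsNet ε₂ B S₂) :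
    ∃ S : Finset Y, IsNet (L₂ * (L₁ * ε₁ + ε₂)) (G₂ '' (G₁ '' A + B)) S ∧
      S.card ≤ S₁.card * S₂.card := by
  classical
  exact ⟨_, ((h₁.image_of_lipschitzWith hG₁).add h₂).image_of_lipschitzWith hG₂,
    card_image_le.trans (card_add_le.trans (Nat.mul_le_mul_right _ card_image_le))⟩

lemma exists_isNet_of_card_le {T : Set X} {ε B : ℝ} (hε : 0 ≤ ε)
    (hB : ∀ t : Finset X, ↑t ⊆ T → (t : Set X).Pairwise (fun x y ↦ ε < dist x y) →
      (t.card : ℝ) ≤ B) :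
    ∃ S : Finset X, IsNet ε T S ∧ (S.card : ℝ) ≤ B := by
  classical
  by_contra! hnet
  -- a separated set that is not a net can be enlarged
  have hgrow : ∀ n : ℕ, ∃ t : Finset X, ↑t ⊆ T ∧
      (t : Set X).Pairwise (fun x y ↦ ε < dist x y) ∧ t.card = n := by
    intro n
    induction n with
    | zero => exact ⟨∅, by simp, by simp, rfl⟩
    | succ n ih =>
      obtain ⟨t, htT, hsep, rfl⟩ := ih
      have hnot : ¬ ∀ x ∈ T, ∃ y ∈ t, dist x y ≤ ε := fun hcov ↦
        (hnet t ⟨htT, hcov⟩).not_ge (hB t htT hsep)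
      push Not at hnot
      obtain ⟨x, hxT, hfar⟩ := hnot
      have hxt : x ∉ t := fun hx ↦ (hfar x hx).not_ge (by simpa using hε)
      refine ⟨insert x t, ?_, ?_, card_insert_of_notMem hxt⟩
      · simpa [Set.insert_subset_iff] using ⟨hxT, htT⟩
      · rw [coe_insert]
        exact hsep.insert fun y hy _ ↦ ⟨hfar y hy, dist_comm x y ▸ hfar y hy⟩
  obtain ⟨t, htT, hsep, hcard⟩ := hgrow (⌊B⌋₊ + 1)
  have := hB t htT hsep
  rw [hcard] at this
  push_cast at this
  linarith [Nat.lt_floor_add_one B]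

end Net

section Volumetric

variable {E : Type*} [NormedAddCommGroup E] [NormedSpace ℝ E] [FiniteDimensional ℝ E]
  [MeasurableSpace E] [BorelSpace E]

lemma card_le_of_pairwise_lt_dist_of_subset_closedBall {t : Finset E} {x : E} {r ε : ℝ}
    (hr : 0 ≤ r) (hε : 0 < ε) (ht : ↑t ⊆ closedBall x r)
    (hsep : (t : Set E).Pairwise (fun a b ↦ ε < dist a b)) :
    (t.card : ℝ) ≤ (2 * r / ε + 1) ^ finrank ℝ E := by
  set μ : Measure E := Measure.addHaar
  set c := μ (ball 0 1)
  have hc₀ : c ≠ 0 := (measure_ball_pos μ 0 one_pos).ne'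
  have hc : c ≠ ⊤ := measure_ball_lt_top.ne
  have hdisj : (t : Set E).PairwiseDisjoint (fun a ↦ ball a (ε / 2)) := fun a ha b hb hab ↦
    ball_disjoint_ball (by linarith [hsep ha hb hab])
  have hunion : (⋃ a ∈ t, ball a (ε / 2)) ⊆ ball x (r + ε / 2) := by
    refine Set.iUnion₂_subset fun a ha ↦ ball_subset_ball' ?_
    linarith [mem_closedBall.mp (ht ha)]
  have hvol : (t.card : ℝ≥0∞) * (ENNReal.ofReal ((ε / 2) ^ finrank ℝ E) * c) ≤
      ENNReal.ofReal ((r + ε / 2) ^ finrank ℝ E) * c :=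
    calc (t.card : ℝ≥0∞) * (ENNReal.ofReal ((ε / 2) ^ finrank ℝ E) * c)
        = ∑ a ∈ t, μ (ball a (ε / 2)) := by
          simp [Measure.addHaar_ball_of_pos μ _ (half_pos hε), c]
      _ = μ (⋃ a ∈ t, ball a (ε / 2)) :=
          (measure_biUnion_finset hdisj fun _ _ ↦ measurableSet_ball).symm
      _ ≤ μ (ball x (r + ε / 2)) := measure_mono hunion
      _ = ENNReal.ofReal ((r + ε / 2) ^ finrank ℝ E) * c :=
          Measure.addHaar_ball_of_pos μ _ (by positivity)
  rw [← mul_assoc, ENNReal.mul_le_mul_iff_left hc₀ hc, ← ENNReal.ofReal_natCast,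
    ← ENNReal.ofReal_mul (by positivity), ENNReal.ofReal_le_ofReal_iff (by positivity)] at hvol
  calc (t.card : ℝ) = t.card * (ε / 2) ^ finrank ℝ E / (ε / 2) ^ finrank ℝ E := by
        field_simp
    _ ≤ (r + ε / 2) ^ finrank ℝ E / (ε / 2) ^ finrank ℝ E := by gcongr
    _ = (2 * r / ε + 1) ^ finrank ℝ E := by
        rw [← div_pow]
        congr 1
        field_simp

lemma exists_isNet_closedBall (x : E) {r ε : ℝ} (hr : 0 ≤ r) (hε : 0 < ε) :
    ∃ S : Finset E, IsNet ε (closedBall x r) S ∧ (S.card : ℝ) ≤ (2 * r / ε + 1) ^ finrank ℝ E :=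
  exists_isNet_of_card_le hε.le fun _ ht hsep ↦
    card_le_of_pairwise_lt_dist_of_subset_closedBall hr hε ht hsep

end Volumetric

section Maurey

variable {E : Type*} [NormedAddCommGroup E] [InnerProductSpace ℝ E] {ι : Type*} [Fintype ι]
  {w : ι → ℝ} {v : ι → E} {x : E}

lemma sum_mul_norm_add_sq (hw : ∑ i, w i = 1) (hx : ∑ i, w i • v i = x) (u : E) :
    ∑ i, w i * ‖u + v i‖ ^ 2 = ‖u + x‖ ^ 2 + (∑ i, w i * ‖v i‖ ^ 2 - ‖x‖ ^ 2) := by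
  subst hx
  simp only [norm_add_sq_real, inner_sum, inner_smul_right, mul_add, sum_add_distrib,
    ← sum_mul, hw, mul_sum]
  ring_nf

lemma exists_norm_add_sq_le (hw₀ : ∀ i, 0 ≤ w i) (hw : ∑ i, w i = 1)
    (hx : ∑ i, w i • v i = x) (u : E) :
    ∃ i, ‖u + v i‖ ^ 2 ≤ ‖u + x‖ ^ 2 + (∑ i, w i * ‖v i‖ ^ 2 - ‖x‖ ^ 2) := by
  have hw₁ : 0 < ∑ i, w i := hw ▸ one_pos
  obtain ⟨i, -, hi⟩ := exists_mem_eq_inf' (nonempty_of_sum_ne_zero hw₁.ne')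
    fun i ↦ ‖u + v i‖ ^ 2
  refine ⟨i, hi ▸ (inf_le_centerMass (fun i _ ↦ hw₀ i) hw₁).trans_eq ?_⟩
  rw [centerMass, hw, inv_one, one_smul, ← sum_mul_norm_add_sq hw hx u]
  rfl

lemma exists_norm_sum_sub_nsmul_sq_le (hw₀ : ∀ i, 0 ≤ w i) (hw : ∑ i, w i = 1)
    (hx : ∑ i, w i • v i = x) (m : ℕ) :
    ∃ f : Fin m → ι, ‖∑ j, v (f j) - (m : ℝ) • x‖ ^ 2 ≤
      m * (∑ i, w i * ‖v i‖ ^ 2 - ‖x‖ ^ 2) := by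
  induction m with
  | zero => exact ⟨Fin.elim0, by simp⟩
  | succ m ih =>
    obtain ⟨f, hf⟩ := ih
    obtain ⟨i, hi⟩ := exists_norm_add_sq_le hw₀ hw hx (∑ j, v (f j) - ((m + 1 : ℕ) : ℝ) • x)
    refine ⟨Fin.cons i f, ?_⟩
    set g : Fin (m + 1) → ι := Fin.cons i f
    have hsum : ∑ j, v (g j) - ((m + 1 : ℕ) : ℝ) • x =
        ∑ j, v (f j) - ((m + 1 : ℕ) : ℝ) • x + v i := by
      rw [Fin.sum_univ_succ]
      simp only [g, Fin.cons_zero, Fin.cons_succ]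
      abel
    have hprev : ∑ j, v (f j) - ((m + 1 : ℕ) : ℝ) • x + x = ∑ j, v (f j) - (m : ℝ) • x := by
      push_cast
      rw [add_smul, one_smul]
      abel
    rw [hprev] at hi
    rw [hsum]
    refine hi.trans ?_
    push_cast
    linarith

lemma exists_norm_sub_sum_inv_smul_sq_le (hw₀ : ∀ i, 0 ≤ w i) (hw : ∑ i, w i = 1)
    (hx : ∑ i, w i • v i = x) {R : ℝ} (hv : ∀ i, ‖v i‖ ≤ R) {m : ℕ} (hm : m ≠ 0) :
    ∃ f : Fin m → ι, ‖x - ∑ j, (m : ℝ)⁻¹ • v (f j)‖ ^ 2 ≤ (R ^ 2 - ‖x‖ ^ 2) / m := by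
  obtain ⟨f, hf⟩ := exists_norm_sum_sub_nsmul_sq_le hw₀ hw hx m
  have hR : ∑ i, w i * ‖v i‖ ^ 2 ≤ R ^ 2 :=
    calc ∑ i, w i * ‖v i‖ ^ 2 ≤ ∑ i, w i * R ^ 2 :=
          sum_le_sum fun i _ ↦ by gcongr; exacts [hw₀ i, hv i]
      _ = R ^ 2 := by rw [← sum_mul, hw, one_mul]
  have hm' : (0 : ℝ) < m := by positivity
  refine ⟨f, ?_⟩
  have hdiff : x - ∑ j, (m : ℝ)⁻¹ • v (f j) = -((m : ℝ)⁻¹ • (∑ j, v (f j) - (m : ℝ) • x)) := by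
    rw [← smul_sum, smul_sub, inv_smul_smul₀ hm'.ne', neg_sub]
  rw [hdiff, norm_neg, norm_smul, mul_pow, Real.norm_eq_abs, abs_inv, Nat.abs_cast,
    inv_pow, ← div_eq_inv_mul, div_le_div_iff₀ (by positivity) hm']
  nlinarith

end Maurey

section L1Ball

variable {p : ℕ} {r : ℝ}

noncomputable def l1Vertex (r : ℝ) : Option (Fin p × Bool) → EuclideanSpace ℝ (Fin p)
  | none => 0
  | some (i, b) => EuclideanSpace.single i (if b then r else -r)

lemma norm_l1Vertex_le (hr : 0 ≤ r) (o : Option (Fin p × Bool)) : ‖l1Vertex r o‖ ≤ r := by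
  rcases o with _ | ⟨i, _ | _⟩ <;> simp [l1Vertex, abs_of_nonneg hr, hr]

lemma l1Vertex_mem_l1Ball (hr : 0 ≤ r) (o : Option (Fin p × Bool)) :
    l1Vertex r o ∈ l1Ball p r := by
  rcases o with _ | ⟨i, _ | _⟩ <;> simp [l1Ball, l1Vertex, apply_ite (|·|), abs_of_nonneg hr, hr]

lemma convex_l1Ball : Convex ℝ (l1Ball p r) := by
  intro x hx y hy a b ha hb hab
  calc ∑ i, |(a • x + b • y) i| ≤ ∑ i, (a * |x i| + b * |y i|) := by
        refine sum_le_sum fun i _ ↦ (abs_add_le _ _).trans_eq ?_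
        simp [abs_mul, abs_of_nonneg ha, abs_of_nonneg hb]
    _ ≤ r := by
        rw [sum_add_distrib, ← mul_sum, ← mul_sum]
        calc a * ∑ i, |x i| + b * ∑ i, |y i| ≤ a * r + b * r := by
              gcongr
              exacts [hx, hy]
          _ = r := by rw [← add_mul, hab, one_mul]

lemma exists_weights_sum_smul_l1Vertex (hr : 0 < r) {x : EuclideanSpace ℝ (Fin p)}
    (hx : x ∈ l1Ball p r) :
    ∃ w : Option (Fin p × Bool) → ℝ, (∀ o, 0 ≤ w o) ∧ ∑ o, w o = 1 ∧
      ∑ o, w o • l1Vertex r o = x := by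
  let w : Option (Fin p × Bool) → ℝ
    | none => 1 - (∑ i, |x i|) / r
    | some (i, true) => (x i)⁺ / r
    | some (i, false) => (x i)⁻ / r
  refine ⟨w, ?_, ?_, ?_⟩
  · rintro (_ | ⟨i, _ | _⟩)
    · simpa [w, div_le_one hr] using hx.out
    all_goals positivity
  · simp [w, Fintype.sum_option, Fintype.sum_prod_type, ← add_div, posPart_add_negPart, ← sum_div]
  · ext j
    simp [w, l1Vertex, Fintype.sum_option, Fintype.sum_prod_type, Pi.single_apply, hr.ne',
      sum_add_distrib, ← sub_eq_add_neg, posPart_sub_negPart]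

lemma exists_isNet_l1Ball (hr : 0 < r) {K : ℝ} (hK : 1 ≤ K) :
    ∃ S : Finset (EuclideanSpace ℝ (Fin p)), IsNet (r / K) (l1Ball p r) S ∧
      (S.card : ℝ) ≤ (2 * p + 1) ^ (K ^ 2) := by
  classical
  set m := ⌊K ^ 2⌋₊
  have hm : m ≠ 0 := (Nat.floor_pos.mpr (one_le_pow₀ hK)).ne'
  have hmK : (m : ℝ) ≤ K ^ 2 := Nat.floor_le (by positivity)
  have hKm : K ^ 2 - 1 ≤ m := by linarith [Nat.lt_floor_add_one (K ^ 2)]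
  set avg : (Fin m → Option (Fin p × Bool)) → EuclideanSpace ℝ (Fin p) :=
    fun f ↦ ∑ j, (m : ℝ)⁻¹ • l1Vertex r (f j)
  refine ⟨univ.image avg, ⟨?_, ?_⟩, ?_⟩
  · rw [coe_image, coe_univ, Set.image_univ]
    rintro _ ⟨f, rfl⟩
    exact convex_l1Ball.sum_mem (fun _ _ ↦ by positivity) (by simp [hm])
      fun j _ ↦ l1Vertex_mem_l1Ball hr.le (f j)
  · intro x hx
    -- the sampling bound (r² - ‖x‖²)/m beats (r/K)² only for ‖x‖ > r/K; smaller x are covered by 0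
    by_cases hsmall : ‖x‖ ≤ r / K
    · exact ⟨0, mem_image.mpr ⟨fun _ ↦ none, mem_univ _, by simp [avg, l1Vertex]⟩,
        by simpa using hsmall⟩
    obtain ⟨w, hw₀, hw, hxw⟩ := exists_weights_sum_smul_l1Vertex hr hx
    obtain ⟨f, hf⟩ := exists_norm_sub_sum_inv_smul_sq_le hw₀ hw hxw (norm_l1Vertex_le hr.le) hm
    refine ⟨avg f, mem_image_of_mem _ (mem_univ f), ?_⟩
    rw [dist_eq_norm]
    refine (pow_le_pow_iff_left₀ (norm_nonneg _) (by positivity) two_ne_zero).mp (hf.trans ?_)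
    have hK₀ : 0 < K := by linarith
    have hx₂ : (r / K) ^ 2 < ‖x‖ ^ 2 :=
      pow_lt_pow_left₀ (not_le.mp hsmall) (by positivity) two_ne_zero
    rw [div_le_iff₀ (by positivity)]
    have : r ^ 2 = (r / K) ^ 2 * K ^ 2 := by field_simp
    nlinarith
  · calc (#(univ.image avg) : ℝ) ≤ #(univ : Finset (Fin m → Option (Fin p × Bool))) := by
          exact_mod_cast card_image_le
      _ = (2 * p + 1 : ℝ) ^ (m : ℝ) := by simp [Real.rpow_natCast]; ring
      _ ≤ (2 * p + 1) ^ (K ^ 2) :=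
          Real.rpow_le_rpow_of_exponent_le (by linarith [p.cast_nonneg (α := ℝ)]) hmK

end L1Ball

/-- Covering number of the image of the extended range: for `G₁` `L₁`-Lipschitz and `G₂`
`L₂`-Lipschitz, `r₂ = Kδ/L₂`,
`log N(2δ, G₂(G₁(B₂ᵏ(r₁)) ⊕ B₁ᵖ(r₂)), ‖·‖₂) ≤ k log(4L₁L₂r₁/δ) + K² log(2p+1)`. -/
theorem covering_extended_range {k p n : ℕ}
    (G₁ : EuclideanSpace ℝ (Fin k) → EuclideanSpace ℝ (Fin p))
    (G₂ : EuclideanSpace ℝ (Fin p) → EuclideanSpace ℝ (Fin n))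
    (L₁ L₂ : ℝ≥0) (hL₁ : 0 < L₁) (hL₂ : 0 < L₂)
    (hG₁ : LipschitzWith L₁ G₁) (hG₂ : LipschitzWith L₂ G₂)
    (r₁ r₂ δ K : ℝ) (hr₁ : 0 < r₁) (hδ : 0 < δ) (hK : 1 ≤ K)
    (hδr : δ ≤ 2 * (L₁ * L₂ * r₁)) (hr₂ : r₂ = K * δ / L₂) :
    coveringNumber (2 * δ)
        (G₂ '' (G₁ '' Metric.closedBall (0 : EuclideanSpace ℝ (Fin k)) r₁ + l1Ball p r₂)) ≠ ⊤ ∧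
      Real.log ((coveringNumber (2 * δ)
          (G₂ '' (G₁ '' Metric.closedBall (0 : EuclideanSpace ℝ (Fin k)) r₁ +
            l1Ball p r₂))).toNat) ≤
        k * Real.log (4 * L₁ * L₂ * r₁ / δ) + K ^ 2 * Real.log (2 * p + 1) := by
  have hK₀ : 0 < K := by linarith
  set ε := δ / (L₁ * L₂)
  obtain ⟨S₁, hS₁, hS₁card⟩ :=
    exists_isNet_closedBall (0 : EuclideanSpace ℝ (Fin k)) hr₁.le (by positivity : 0 < ε)
  obtain ⟨S₂, hS₂, hS₂card⟩ := exists_isNet_l1Ball (p := p) (by rw [hr₂]; positivity : 0 < r₂) hK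
  obtain ⟨S, hS, hScard⟩ := exists_isNet_image_add_image hG₁ hG₂ hS₁ hS₂
  have hradius : (L₂ : ℝ) * (L₁ * ε + r₂ / K) = 2 * δ := by
    simp only [ε, hr₂]; field_simp; ring
  rw [hradius] at hS
  rw [finrank_euclideanSpace_fin] at hS₁card
  have hbase : 2 * r₁ / ε + 1 ≤ 4 * L₁ * L₂ * r₁ / δ := by
    rw [div_div_eq_mul_div, div_add_one hδ.ne', div_le_div_iff_of_pos_right hδ]
    linarith
  have hA : 1 ≤ 2 * r₁ / ε + 1 := le_add_of_nonneg_left (by positivity)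
  have hB : (1 : ℝ) ≤ 2 * p + 1 := by linarith [p.cast_nonneg (α := ℝ)]
  refine ⟨hS.coveringNumber_ne_top, ?_⟩
  calc _ ≤ Real.log ((2 * r₁ / ε + 1) ^ k * (2 * p + 1) ^ (K ^ 2)) :=
        hS.log_coveringNumber_le
          ((Nat.cast_le.mpr hScard).trans (by push_cast; gcongr))
          (one_le_mul_of_one_le_of_one_le (one_le_pow₀ hA) (Real.one_le_rpow hB (by positivity)))
    _ = k * Real.log (2 * r₁ / ε + 1) + K ^ 2 * Real.log (2 * p + 1) := by
        rw [Real.log_mul (by positivity) (by positivity), Real.log_pow,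
          Real.log_rpow (by positivity)]
    _ ≤ _ := by gcongr
end

section
/- Under the S-REC condition S-REC(S, γ, δ') for A and with x̃ the measurement minimizer over S, the intermediate bound ‖G₂(z̄) − G₂(z̃)‖ ≤ (4‖x − G₂(z̄)‖ + δ')/γ holds, where G₂(z̄), G₂(z̃) ∈ S, z̄ minimizes the true error ‖x − G₂(z)‖ and z̃ minimizes the measurement error ‖Ax − AG₂(z)‖ over the same feasible set, assuming ‖A(x − G₂(z̄))‖ ≤ 2‖x − G₂(z̄)‖. -/
/-! The two minimizers are both feasible, so S-REC bounds `γ‖G₂ z̄ - G₂ z̃‖ - δ'` by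
`‖A(G₂ z̄ - G₂ z̃)‖`. Since `A G₂ z̃` is at least as close to `A x` as `A G₂ z̄`, the triangle
inequality through `A x` gives `‖A(G₂ z̄ - G₂ z̃)‖ ≤ 2‖A(x - G₂ z̄)‖ ≤ 4‖x - G₂ z̄‖`. -/

theorem norm_sub_le_two_mul_of_norm_sub_le {E : Type*} [SeminormedAddCommGroup E] {y a b : E}
    (h : ‖y - b‖ ≤ ‖y - a‖) : ‖a - b‖ ≤ 2 * ‖y - a‖ :=
  calc ‖a - b‖ ≤ ‖a - y‖ + ‖y - b‖ := norm_sub_le_norm_sub_add_norm_sub a y b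
    _ ≤ 2 * ‖y - a‖ := by rw [norm_sub_rev a y]; linarith

section SREC

variable {E F 𝓕 : Type*} [SeminormedAddCommGroup E] [SeminormedAddCommGroup F]
  [FunLike 𝓕 E F] [AddMonoidHomClass 𝓕 E F]

/-- The set-restricted eigenvalue condition `S-REC(S, γ, δ)` for `A`. -/
def SREC (A : 𝓕) (S : Set E) (γ δ : ℝ) : Prop :=
  ∀ x₁ ∈ S, ∀ x₂ ∈ S, γ * ‖x₁ - x₂‖ - δ ≤ ‖A (x₁ - x₂)‖

theorem SREC.mul_norm_sub_sub_le_of_norm_sub_le {A : 𝓕} {S : Set E} {γ δ : ℝ}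
    (hS : SREC A S γ δ) {x u v : E} (hu : u ∈ S) (hv : v ∈ S)
    (hmin : ‖A x - A v‖ ≤ ‖A x - A u‖) :
    γ * ‖u - v‖ - δ ≤ 2 * ‖A (x - u)‖ :=
  calc γ * ‖u - v‖ - δ ≤ ‖A (u - v)‖ := hS u hu v hv
    _ ≤ 2 * ‖A (x - u)‖ := by
      rw [map_sub, map_sub]; exact norm_sub_le_two_mul_of_norm_sub_le hmin

end SREC

/-- Intermediate S-REC bound: with `S = G₂(Z)` satisfying `S-REC(S, γ, δ')`, `zbar` the
true-error minimizer, `ztil` the measurement-error minimizer over `Z`, and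
`‖A(x − G₂(zbar))‖ ≤ 2‖x − G₂(zbar)‖`, one has
`‖G₂(zbar) − G₂(ztil)‖ ≤ (4‖x − G₂(zbar)‖ + δ')/γ`. -/
theorem srec_intermediate_bound {p m n : ℕ}
    (G₂ : EuclideanSpace ℝ (Fin p) → EuclideanSpace ℝ (Fin n))
    (A : EuclideanSpace ℝ (Fin n) →ₗ[ℝ] EuclideanSpace ℝ (Fin m))
    (Z : Set (EuclideanSpace ℝ (Fin p))) (γ δ' : ℝ) (hγ : 0 < γ)
    (hSREC : ∀ x₁ ∈ G₂ '' Z, ∀ x₂ ∈ G₂ '' Z, γ * ‖x₁ - x₂‖ - δ' ≤ ‖A (x₁ - x₂)‖)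
    (x : EuclideanSpace ℝ (Fin n)) (zbar ztil : EuclideanSpace ℝ (Fin p))
    (hzbar : zbar ∈ Z ∧ ∀ z ∈ Z, ‖x - G₂ zbar‖ ≤ ‖x - G₂ z‖)
    (hztil : ztil ∈ Z ∧ ∀ z ∈ Z, ‖A x - A (G₂ ztil)‖ ≤ ‖A x - A (G₂ z)‖)
    (hAx : ‖A (x - G₂ zbar)‖ ≤ 2 * ‖x - G₂ zbar‖) :
    ‖G₂ zbar - G₂ ztil‖ ≤ (4 * ‖x - G₂ zbar‖ + δ') / γ := by
  have hgap : γ * ‖G₂ zbar - G₂ ztil‖ - δ' ≤ 2 * ‖A (x - G₂ zbar)‖ :=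
    SREC.mul_norm_sub_sub_le_of_norm_sub_le (A := A) hSREC (Set.mem_image_of_mem G₂ hzbar.1)
      (Set.mem_image_of_mem G₂ hztil.1) (hztil.2 zbar hzbar.1)
  rw [le_div_iff₀ hγ]
  linarith
end
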